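/- arXiv:math/0702448 — 2 statements merged into one kernel-verified Lean document; each statement's English description precedes it below -/
import Mathlib

section
/- If Γ and Λ are lattices in ℝ^d related by a non-zero linear similarity, then for every m ∈ ℕ the number of similar sublattices of Γ of index m equals the number of similar sublattices of Λ of index m. -/
open scoped RealInnerProductSpace

noncomputable section

/-- A non-zero linear similarity of ℝ^d: a linear map scaling all inner
products by a constant c > 0. -/
def IsSimilarity {d : ℕ} (S : EuclideanSpace ℝ (Fin d) →ₗ[ℝ] EuclideanSpace ℝ (Fin d)) : Prop :=
  ∃ c : ℝ, 0 < c ∧ ∀ u v : EuclideanSpace ℝ (Fin d), (inner ℝ (S u) (S v) : ℝ) = c * inner ℝ u v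

/-- A lattice in ℝ^d: a free ℤ-module of rank d whose ℝ-span is all of ℝ^d. -/
def IsLattice {d : ℕ} (Γ : AddSubgroup (EuclideanSpace ℝ (Fin d))) : Prop :=
  Nonempty (Module.Basis (Fin d) ℤ (AddSubgroup.toIntSubmodule Γ)) ∧
  Submodule.span ℝ (Γ : Set (EuclideanSpace ℝ (Fin d))) = ⊤

/-- The set of similar sublattices (SSLs) of Γ of index m: sublattices of Γ that
are images of Γ under a (non-zero) linear similarity and have index m in Γ. -/
def SSL {d : ℕ} (Γ : AddSubgroup (EuclideanSpace ℝ (Fin d))) (m : ℕ) :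
    Set (AddSubgroup (EuclideanSpace ℝ (Fin d))) :=
  {Λ | Λ ≤ Γ ∧ Λ.relIndex Γ = m ∧
    ∃ S : EuclideanSpace ℝ (Fin d) →ₗ[ℝ] EuclideanSpace ℝ (Fin d),
      IsSimilarity S ∧ S '' (Γ : Set (EuclideanSpace ℝ (Fin d))) = (Λ : Set (EuclideanSpace ℝ (Fin d)))}

/-!
A similarity `S` carries `Γ` onto `Λ = SΓ` and is injective, so it preserves relative indices;
and if `T` maps `Γ` onto a sublattice `Γ'`, the conjugate `S T S⁻¹` is a similarity mapping
`Λ` onto `SΓ'`. Hence `Γ' ↦ SΓ'` is a bijection from the SSLs of `Γ` of index `m` onto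
those of `Λ`, with inverse induced by `S⁻¹`.
-/

namespace IsSimilarity

variable {d : ℕ} {S T : EuclideanSpace ℝ (Fin d) →ₗ[ℝ] EuclideanSpace ℝ (Fin d)}
  {e : EuclideanSpace ℝ (Fin d) ≃ₗ[ℝ] EuclideanSpace ℝ (Fin d)}
  {Γ Λ : AddSubgroup (EuclideanSpace ℝ (Fin d))} {m : ℕ}

theorem injective (hS : IsSimilarity S) : Function.Injective S := by
  obtain ⟨c, hc, h⟩ := hS
  refine (injective_iff_map_eq_zero S).2 fun u hu => ?_
  have : c * ⟪u, u⟫ = 0 := by rw [← h, hu, inner_zero_left]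
  exact inner_self_eq_zero.1 ((mul_eq_zero.1 this).resolve_left hc.ne')

theorem comp (hS : IsSimilarity S) (hT : IsSimilarity T) : IsSimilarity (S ∘ₗ T) := by
  obtain ⟨c, hc, h⟩ := hS
  obtain ⟨c', hc', h'⟩ := hT
  exact ⟨c * c', mul_pos hc hc', fun u v => by simp only [LinearMap.comp_apply, h, h', mul_assoc]⟩

theorem symm (he : IsSimilarity e.toLinearMap) : IsSimilarity e.symm.toLinearMap := by
  obtain ⟨c, hc, h⟩ := he
  refine ⟨c⁻¹, inv_pos.2 hc, fun u v => ?_⟩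
  have := h (e.symm u) (e.symm v)
  simp only [LinearEquiv.coe_coe, LinearEquiv.apply_symm_apply] at this
  simp only [LinearEquiv.coe_coe, this, inv_mul_cancel_left₀ hc.ne']

theorem map_mem_SSL (he : IsSimilarity e.toLinearMap) (hΛ : Λ ∈ SSL Γ m) :
    Λ.map e.toLinearMap.toAddMonoidHom ∈ SSL (Γ.map e.toLinearMap.toAddMonoidHom) m := by
  obtain ⟨hle, hindex, T, hT, hTΓ⟩ := hΛ
  refine ⟨AddSubgroup.map_mono hle,
    by rwa [AddSubgroup.relIndex_map_map_of_injective _ _ e.injective],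
    e ∘ₗ T ∘ₗ e.symm, (he.comp hT).comp he.symm, ?_⟩
  simp [← hTΓ, Set.image_image]

theorem SSL_map_eq_image (he : IsSimilarity e.toLinearMap) :
    SSL (Γ.map e.toLinearMap.toAddMonoidHom) m =
      AddSubgroup.map e.toLinearMap.toAddMonoidHom '' SSL Γ m := by
  have hΓ : (Γ.map e.toLinearMap.toAddMonoidHom).map e.symm.toLinearMap.toAddMonoidHom = Γ :=
    SetLike.ext' (by simp [Set.image_image])
  refine Set.Subset.antisymm (fun Λ hΛ => ⟨_, hΓ ▸ he.symm.map_mem_SSL hΛ, ?_⟩)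
    (Set.image_subset_iff.2 fun Λ => he.map_mem_SSL)
  exact SetLike.ext' (by simp [Set.image_image])

end IsSimilarity

theorem card_SSL_eq_of_similar_general {d : ℕ}
    (Γ Λ : AddSubgroup (EuclideanSpace ℝ (Fin d)))
    (h : ∃ S, IsSimilarity S ∧
      S '' (Γ : Set (EuclideanSpace ℝ (Fin d))) = (Λ : Set (EuclideanSpace ℝ (Fin d))))
    (m : ℕ) :
    Nat.card (SSL Γ m) = Nat.card (SSL Λ m) := by
  obtain ⟨S, hS, hSΓ⟩ := h
  obtain ⟨e, rfl⟩ : ∃ e : EuclideanSpace ℝ (Fin d) ≃ₗ[ℝ] EuclideanSpace ℝ (Fin d), ↑e = S :=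
    ⟨LinearEquiv.ofInjectiveEndo S hS.injective, LinearMap.ext fun _ => rfl⟩
  obtain rfl : Λ = Γ.map e.toLinearMap.toAddMonoidHom := SetLike.ext' (by simpa using hSΓ.symm)
  rw [hS.SSL_map_eq_image, Nat.card_image_of_injective (AddSubgroup.map_injective e.injective)]

/-- similar lattices have the same number of similar sublattices of
each index. -/
theorem card_SSL_eq_of_similar {d : ℕ}
    (Γ Λ : AddSubgroup (EuclideanSpace ℝ (Fin d)))
    (hΓ : IsLattice Γ) (hΛ : IsLattice Λ)
    (h : ∃ S, IsSimilarity S ∧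
      S '' (Γ : Set (EuclideanSpace ℝ (Fin d))) = (Λ : Set (EuclideanSpace ℝ (Fin d))))
    (m : ℕ) :
    Nat.card (SSL Γ m) = Nat.card (SSL Λ m) :=
  card_SSL_eq_of_similar_general Γ Λ h m
end
end

section
/- Every non-zero ℝ-linear similarity of ℝ^4 ≅ ℍ(ℝ) is either of the form x ↦ pxq (orientation preserving) or x ↦ p x̄ q (orientation reversing) for non-zero quaternions p, q ∈ ℍ(ℝ); conversely every map of these forms is a linear similarity, with determinant ±|p|⁴|q|⁴. -/
/-!
Normalising a similarity `S` by `(S 1)⁻¹` on the left gives a linear isometry `T` of `ℍ` fixing `1`.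
Such a `T` preserves real parts, hence commutes with conjugation and preserves
`x ȳ + y x̄ = 2⟪x, y⟫`; so `T i`, `T j`, `T k` are pairwise anticommuting square roots of `-1`,
which forces `T k = ± T i * T j`. In the `+` case `T` agrees on `1, i, j, k` with `x ↦ w x w⁻¹`
for a `w` conjugating `i, j` to `T i, T j`, built from the identity `(1 - v u) u = v (1 - v u)`
for square roots `u, v` of `-1`; in the `-` case apply this to `T ∘ conj`.
Conversely `|p x q| = |p| |x| |q|`; and `det (x ↦ p x) = |p|⁴`, `det (x ↦ x̄) = -1`, while
`x ↦ x q` is conjugate by `x ↦ x̄` to `x ↦ q̄ x`.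
-/

noncomputable section

open Quaternion

/-- A non-zero linear similarity of ℍ(ℝ) ≅ ℝ⁴: a linear map scaling all inner
products by a constant c > 0. -/
def IsSimilarityQ (S : ℍ →ₗ[ℝ] ℍ) : Prop :=
  ∃ c : ℝ, 0 < c ∧ ∀ u v : ℍ, (inner ℝ (S u) (S v) : ℝ) = c * inner ℝ u v

/-- The linear map x ↦ p·x·q on ℍ(ℝ). -/
def mulLR (p q : ℍ) : ℍ →ₗ[ℝ] ℍ :=
  (LinearMap.mulRight ℝ q).comp (LinearMap.mulLeft ℝ p)

/-- Quaternion conjugation x ↦ x̄ as an ℝ-linear map. -/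
def quatConjL : ℍ →ₗ[ℝ] ℍ where
  toFun := star
  map_add' := star_add
  map_smul' := fun r x => by simp

open scoped RealInnerProductSpace

theorem inner_map_map_of_norm_map_eq_mul {E F : Type*} [NormedAddCommGroup E]
    [InnerProductSpace ℝ E] [NormedAddCommGroup F] [InnerProductSpace ℝ F] (f : E →ₗ[ℝ] F)
    {c : ℝ} (hf : ∀ x, ‖f x‖ = c * ‖x‖) (x y : E) : ⟪f x, f y⟫ = c ^ 2 * ⟪x, y⟫ := by
  rw [real_inner_eq_norm_add_mul_self_sub_norm_mul_self_sub_norm_mul_self_div_two,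
    real_inner_eq_norm_add_mul_self_sub_norm_mul_self_sub_norm_mul_self_div_two x y,
    ← map_add, hf, hf, hf]
  ring

section Ring

variable {R : Type*} [Ring R]

theorem one_sub_mul_mul_eq_mul_one_sub_mul {u v : R} (hu : u * u = -1) (hv : v * v = -1) :
    (1 - v * u) * u = v * (1 - v * u) := by
  rw [sub_mul, mul_sub, mul_assoc, hu, ← mul_assoc, hv]
  noncomm_ring

theorem eq_neg_of_one_sub_mul_eq_zero {u v : R} (hu : u * u = -1) (h : 1 - v * u = 0) :
    v = -u := by
  have hvu : v * u = 1 := (sub_eq_zero.mp h).symm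
  calc v = -(v * (u * u)) := by rw [hu, mul_neg_one, neg_neg]
    _ = -u := by rw [← mul_assoc, hvu, one_mul]

theorem commute_mul_of_anticommute {x y z : R} (hy : y * x = -(x * y)) (hz : z * x = -(x * z)) :
    Commute x (y * z) := by
  calc x * (y * z) = -(y * x) * z := by rw [hy, neg_neg, mul_assoc]
    _ = y * z * x := by rw [neg_mul, mul_assoc, mul_assoc y z, hz, mul_neg]

theorem eq_mul_or_eq_neg_mul [NoZeroDivisors R] {I J K : R} (hI : I * I = -1) (hJ : J * J = -1)
    (hK : K * K = -1) (hJI : J * I = -(I * J)) (hIK : I * K = -(K * I))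
    (hJK : J * K = -(K * J)) : K = I * J ∨ K = -(I * J) := by
  have hIJ : I * J * (I * J) = -1 := by
    rw [mul_assoc, ← mul_assoc J, hJI, neg_mul, mul_neg, mul_assoc, ← mul_assoc I, hI, hJ]
    noncomm_ring
  have hcomm : K * (I * J) = I * J * K := commute_mul_of_anticommute hIK hJK
  have hprod : (K - I * J) * (K + I * J) = 0 := by
    rw [sub_mul, mul_add, mul_add, hK, hcomm, hIJ]
    abel
  rcases mul_eq_zero.mp hprod with h | h
  · exact Or.inl (sub_eq_zero.mp h)
  · exact Or.inr (eq_neg_of_add_eq_zero_left h)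

end Ring

namespace Quaternion

@[simp] lemma mulLR_apply (p q x : ℍ) : mulLR p q x = p * x * q := rfl

@[simp] lemma quatConjL_apply (x : ℍ) : quatConjL x = star x := rfl

def quatConjLI : ℍ →ₗᵢ[ℝ] ℍ := ⟨quatConjL, norm_star⟩

@[simp] lemma quatConjLI_apply (x : ℍ) : quatConjLI x = star x := rfl

theorem mulLR_apply_of_mul_eq {w x y : ℍ} (hw : w ≠ 0) (h : w * x = y * w) :
    mulLR w w⁻¹ x = y := by
  rw [mulLR_apply, h, mul_inv_cancel_right₀ hw]

theorem mulLeft_comp_mulLR (p a b : ℍ) :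
    (LinearMap.mulLeft ℝ p).comp (mulLR a b) = mulLR (p * a) b :=
  LinearMap.ext fun x => by simp [mul_assoc]

def qi : ℍ := ⟨0, 1, 0, 0⟩
def qj : ℍ := ⟨0, 0, 1, 0⟩
def qk : ℍ := ⟨0, 0, 0, 1⟩

@[simp] lemma re_qi : qi.re = 0 := rfl
@[simp] lemma imI_qi : qi.imI = 1 := rfl
@[simp] lemma imJ_qi : qi.imJ = 0 := rfl
@[simp] lemma imK_qi : qi.imK = 0 := rfl
@[simp] lemma re_qj : qj.re = 0 := rfl
@[simp] lemma imI_qj : qj.imI = 0 := rfl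
@[simp] lemma imJ_qj : qj.imJ = 1 := rfl
@[simp] lemma imK_qj : qj.imK = 0 := rfl
@[simp] lemma re_qk : qk.re = 0 := rfl
@[simp] lemma imI_qk : qk.imI = 0 := rfl
@[simp] lemma imJ_qk : qk.imJ = 0 := rfl
@[simp] lemma imK_qk : qk.imK = 1 := rfl

lemma qi_mul_qi : qi * qi = -1 := by ext <;> simp
lemma qj_mul_qj : qj * qj = -1 := by ext <;> simp
lemma qi_mul_qj : qi * qj = qk := by ext <;> simp
lemma qj_mul_qi : qj * qi = -qk := by ext <;> simp
lemma qk_mul_qk : qk * qk = -1 := by ext <;> simp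
lemma qi_mul_qk : qi * qk = -qj := by ext <;> simp
lemma qk_mul_qi : qk * qi = qj := by ext <;> simp
lemma qj_mul_qk : qj * qk = qi := by ext <;> simp
lemma qk_mul_qj : qk * qj = -qi := by ext <;> simp
lemma star_qi : star qi = -qi := star_eq_neg.mpr re_qi
lemma star_qj : star qj = -qj := star_eq_neg.mpr re_qj
lemma star_qk : star qk = -qk := star_eq_neg.mpr re_qk
lemma qi_ne_zero : qi ≠ 0 := fun h => by simpa using congrArg QuaternionAlgebra.imI h
lemma qj_ne_zero : qj ≠ 0 := fun h => by simpa using congrArg QuaternionAlgebra.imJ h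

/-- Mathlib's basis `1, i, j, k` of `ℍ[ℝ,-1,0,-1]`, retyped so that it rewrites terms of `ℍ`. -/
def basisOneIJK : Module.Basis (Fin 4) ℝ ℍ := QuaternionAlgebra.basisOneIJK (-1) 0 (-1)

theorem basisOneIJK_repr (x : ℍ) : basisOneIJK.repr x = ![x.re, x.imI, x.imJ, x.imK] := rfl

theorem coe_basisOneIJK : ⇑basisOneIJK = ![1, qi, qj, qk] := by
  ext n : 1
  apply basisOneIJK.repr.injective
  ext m
  rw [basisOneIJK.repr_self, basisOneIJK_repr]
  fin_cases n <;> fin_cases m <;> simp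

theorem linearMap_ext {M : Type*} [AddCommGroup M] [Module ℝ M] {f g : ℍ →ₗ[ℝ] M}
    (h1 : f 1 = g 1) (hi : f qi = g qi) (hj : f qj = g qj) (hk : f qk = g qk) : f = g :=
  basisOneIJK.ext fun n => by fin_cases n <;> simpa [coe_basisOneIJK]

theorem toMatrix_mulLeft (p : ℍ) :
    LinearMap.toMatrix basisOneIJK basisOneIJK (LinearMap.mulLeft ℝ p) =
      !![p.re, -p.imI, -p.imJ, -p.imK;
         p.imI, p.re, -p.imK, p.imJ;
         p.imJ, p.imK, p.re, -p.imI;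
         p.imK, -p.imJ, p.imI, p.re] := by
  ext m n
  rw [LinearMap.toMatrix_apply, basisOneIJK_repr, LinearMap.mulLeft_apply, coe_basisOneIJK]
  fin_cases m <;> fin_cases n <;> simp

theorem toMatrix_quatConjL :
    LinearMap.toMatrix basisOneIJK basisOneIJK quatConjL = Matrix.diagonal ![1, -1, -1, -1] := by
  ext m n
  rw [LinearMap.toMatrix_apply, basisOneIJK_repr, coe_basisOneIJK]
  fin_cases m <;> fin_cases n <;> simp [Matrix.diagonal]

theorem det_mulLeft (p : ℍ) : LinearMap.det (LinearMap.mulLeft ℝ p) = normSq p ^ 2 := by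
  rw [← LinearMap.det_toMatrix basisOneIJK, toMatrix_mulLeft, Matrix.det_succ_row_zero,
    normSq_def']
  simp only [Fin.sum_univ_succ, Matrix.det_fin_three, Matrix.submatrix_apply, Matrix.of_apply,
    Matrix.cons_val, Fin.succAbove, Fin.reduceSucc, Fin.reduceCastSucc, Fin.reduceLT, ↓reduceIte,
    Fin.val_zero, Fin.val_succ]
  ring

theorem det_quatConjL : LinearMap.det quatConjL = -1 := by
  rw [← LinearMap.det_toMatrix basisOneIJK, toMatrix_quatConjL, Matrix.det_diagonal,
    Fin.prod_univ_four]
  simp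

theorem mulRight_eq_conj_mulLeft_star (q : ℍ) :
    LinearMap.mulRight ℝ q = quatConjL.comp ((LinearMap.mulLeft ℝ (star q)).comp quatConjL) :=
  LinearMap.ext fun x => by simp

theorem det_mulRight (q : ℍ) : LinearMap.det (LinearMap.mulRight ℝ q) = normSq q ^ 2 := by
  rw [mulRight_eq_conj_mulLeft_star, LinearMap.det_comp, LinearMap.det_comp, det_quatConjL,
    det_mulLeft, normSq_star]
  ring

theorem det_mulLR (p q : ℍ) : LinearMap.det (mulLR p q) = ‖p‖ ^ 4 * ‖q‖ ^ 4 := by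
  rw [mulLR, LinearMap.det_comp, det_mulLeft, det_mulRight, normSq_eq_norm_mul_self,
    normSq_eq_norm_mul_self]
  ring

theorem det_mulLR_comp_quatConjL (p q : ℍ) :
    LinearMap.det ((mulLR p q).comp quatConjL) = -(‖p‖ ^ 4 * ‖q‖ ^ 4) := by
  rw [LinearMap.det_comp, det_mulLR, det_quatConjL]
  ring

theorem exists_mul_qi_eq_mul {I : ℍ} (hI : I * I = -1) : ∃ a ≠ 0, a * qi = I * a := by
  by_cases h : 1 - I * qi = 0
  · refine ⟨qj, qj_ne_zero, ?_⟩
    rw [eq_neg_of_one_sub_mul_eq_zero qi_mul_qi h, neg_mul, qi_mul_qj, qj_mul_qi]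
  · exact ⟨_, h, one_sub_mul_mul_eq_mul_one_sub_mul qi_mul_qi hI⟩

theorem exists_commute_qi_mul_qj_eq_mul {J : ℍ} (hJ : J * J = -1) (hJi : J * qi = -(qi * J)) :
    ∃ b ≠ 0, Commute qi b ∧ b * qj = J * b := by
  by_cases h : 1 - J * qj = 0
  · refine ⟨qi, qi_ne_zero, Commute.refl qi, ?_⟩
    rw [eq_neg_of_one_sub_mul_eq_zero qj_mul_qj h, neg_mul, qi_mul_qj, qj_mul_qi, neg_neg]
  · have hji : qj * qi = -(qi * qj) := by rw [qi_mul_qj, qj_mul_qi]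
    exact ⟨_, h, ((Commute.one_right qi).sub_right (commute_mul_of_anticommute hJi hji)),
      one_sub_mul_mul_eq_mul_one_sub_mul qj_mul_qj hJ⟩

/- Skolem–Noether for `ℍ`, made explicit: first conjugate `i` to `I`; then `a⁻¹ J a` anticommutes
with `i`, and an element of the centraliser of `i` conjugates `j` to it. -/
theorem exists_conj_qi_qj {I J : ℍ} (hI : I * I = -1) (hJ : J * J = -1)
    (hJI : J * I = -(I * J)) : ∃ w ≠ 0, w * qi = I * w ∧ w * qj = J * w := by
  obtain ⟨a, ha, hai⟩ := exists_mul_qi_eq_mul hI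
  have hI' : a⁻¹ * I * a = qi := by rw [mul_assoc, ← hai, inv_mul_cancel_left₀ ha]
  set J' := a⁻¹ * J * a
  have hJ' : J' * J' = -1 := by
    simp only [J', mul_assoc, mul_inv_cancel_left₀ ha]
    rw [← mul_assoc J, hJ, neg_one_mul, mul_neg, inv_mul_cancel₀ ha]
  have hJ'i : J' * qi = -(qi * J') := by
    rw [← hI']
    simp only [J', mul_assoc, mul_inv_cancel_left₀ ha]
    rw [← mul_assoc J, hJI, neg_mul, mul_neg, mul_assoc]
  obtain ⟨b, hb, hbi, hbj⟩ := exists_commute_qi_mul_qj_eq_mul hJ' hJ'i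
  refine ⟨a * b, mul_ne_zero ha hb, ?_, ?_⟩
  · rw [mul_assoc, ← hbi.eq, ← mul_assoc, hai, mul_assoc]
  · rw [mul_assoc, hbj, ← mul_assoc, ← mul_assoc, ← mul_assoc, mul_inv_cancel₀ ha, one_mul,
      mul_assoc]

theorem mul_star_add_mul_star (a b : ℍ) :
    a * star b + b * star a = ((normSq (a + b) : ℝ) : ℍ) - (normSq a : ℝ) - (normSq b : ℝ) := by
  rw [coe_normSq_add]
  abel

namespace LinearIsometry

variable (T : ℍ →ₗᵢ[ℝ] ℍ)

theorem normSq_map (x : ℍ) : normSq (T x) = normSq x := by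
  rw [normSq_eq_norm_mul_self, normSq_eq_norm_mul_self, T.norm_map]

variable {T}

theorem re_map (h1 : T 1 = 1) (x : ℍ) : (T x).re = x.re := by
  simpa [inner_def, h1] using T.inner_map_map x 1

theorem map_star (h1 : T 1 = 1) (x : ℍ) : T (star x) = star (T x) := by
  have star_eq : ∀ y : ℍ, star y = (2 * y.re) • (1 : ℍ) - y := fun y => by
    rw [← coe_mul_eq_smul, mul_one, ← self_add_star', add_sub_cancel_left]
  rw [star_eq, star_eq, map_sub, map_smul, h1, re_map h1]

theorem map_mul_star_add (x y : ℍ) :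
    T x * star (T y) + T y * star (T x) = x * star y + y * star x := by
  rw [mul_star_add_mul_star, mul_star_add_mul_star, ← map_add, T.normSq_map, T.normSq_map,
    T.normSq_map]

theorem star_map_of_star_eq_neg (h1 : T 1 = 1) {u : ℍ} (hu : star u = -u) :
    star (T u) = -T u := by
  rw [← map_star h1, hu, map_neg]

theorem map_mul_self (h1 : T 1 = 1) {u : ℍ} (hu : star u = -u) : T u * T u = u * u := by
  calc T u * T u = -(T u * star (T u)) := by rw [star_map_of_star_eq_neg h1 hu, mul_neg, neg_neg]
    _ = -(u * star u) := by rw [self_mul_star, self_mul_star, T.normSq_map]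
    _ = u * u := by rw [hu, mul_neg, neg_neg]

theorem map_anticomm (h1 : T 1 = 1) {u v : ℍ} (hu : star u = -u) (hv : star v = -v)
    (huv : v * u = -(u * v)) : T v * T u = -(T u * T v) := by
  have h := T.map_mul_star_add u v
  rw [star_map_of_star_eq_neg h1 hu, star_map_of_star_eq_neg h1 hv, hu, hv] at h
  simp only [mul_neg, ← neg_add, neg_inj] at h
  refine eq_neg_of_add_eq_zero_left ?_
  rw [add_comm, h, huv, add_neg_cancel]

theorem map_qk_eq_or (h1 : T 1 = 1) : T qk = T qi * T qj ∨ T qk = -(T qi * T qj) :=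
  eq_mul_or_eq_neg_mul (by rw [map_mul_self h1 star_qi, qi_mul_qi])
    (by rw [map_mul_self h1 star_qj, qj_mul_qj]) (by rw [map_mul_self h1 star_qk, qk_mul_qk])
    (map_anticomm h1 star_qi star_qj (by rw [qi_mul_qj, qj_mul_qi]))
    (map_anticomm h1 star_qk star_qi (by rw [qi_mul_qk, qk_mul_qi]))
    (map_anticomm h1 star_qk star_qj (by rw [qj_mul_qk, qk_mul_qj, neg_neg]))

theorem exists_eq_mulLR_of_map_qk (h1 : T 1 = 1) (hk : T qk = T qi * T qj) :
    ∃ w ≠ 0, T.toLinearMap = mulLR w w⁻¹ := by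
  obtain ⟨w, hw, hwi, hwj⟩ := exists_conj_qi_qj (by rw [map_mul_self h1 star_qi, qi_mul_qi])
    (by rw [map_mul_self h1 star_qj, qj_mul_qj])
    (map_anticomm h1 star_qi star_qj (by rw [qi_mul_qj, qj_mul_qi]))
  refine ⟨w, hw, linearMap_ext ?_ ?_ ?_ ?_⟩
  · rw [LinearIsometry.coe_toLinearMap, h1, mulLR_apply_of_mul_eq hw (by rw [mul_one, one_mul])]
  · exact (mulLR_apply_of_mul_eq hw hwi).symm
  · exact (mulLR_apply_of_mul_eq hw hwj).symm
  · refine (mulLR_apply_of_mul_eq hw ?_).symm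
    rw [LinearIsometry.coe_toLinearMap, hk, ← qi_mul_qj, ← mul_assoc, hwi, mul_assoc, hwj,
      mul_assoc]

theorem exists_eq_mulLR (h1 : T 1 = 1) :
    ∃ w ≠ 0, T.toLinearMap = mulLR w w⁻¹ ∨ T.toLinearMap = (mulLR w w⁻¹).comp quatConjL := by
  rcases map_qk_eq_or h1 with hk | hk
  · obtain ⟨w, hw, hTw⟩ := exists_eq_mulLR_of_map_qk h1 hk
    exact ⟨w, hw, Or.inl hTw⟩
  · set T' := T.comp quatConjLI
    have h1' : T' 1 = 1 := by simp [T', h1]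
    have hk' : T' qk = T' qi * T' qj := by simp [T', star_qi, star_qj, star_qk, hk]
    obtain ⟨w, hw, hTw⟩ := exists_eq_mulLR_of_map_qk h1' hk'
    refine ⟨w, hw, Or.inr ?_⟩
    rw [← hTw]
    exact LinearMap.ext fun x => by simp [T']

end LinearIsometry

end Quaternion

theorem IsSimilarityQ.exists_eq_mulLR {S : ℍ →ₗ[ℝ] ℍ} (hS : IsSimilarityQ S) :
    ∃ p q : ℍ, p ≠ 0 ∧ q ≠ 0 ∧ (S = mulLR p q ∨ S = (mulLR p q).comp quatConjL) := by
  obtain ⟨c, hc, hS⟩ := hS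
  set p := S 1
  have hpc : ‖p‖ ^ 2 = c := by
    simpa [real_inner_self_eq_norm_sq] using hS 1 1
  have hp : p ≠ 0 := fun hp => hc.ne' (by rw [← hpc, hp, norm_zero, zero_pow two_ne_zero])
  let T := ((LinearMap.mulLeft ℝ p⁻¹).comp S).isometryOfInner fun u v => by
    rw [LinearMap.comp_apply, LinearMap.comp_apply,
      inner_map_map_of_norm_map_eq_mul _ (norm_mul p⁻¹), hS, norm_inv, inv_pow, hpc,
      inv_mul_cancel_left₀ hc.ne']
  have h1 : T 1 = 1 := inv_mul_cancel₀ hp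
  have hST : S = (LinearMap.mulLeft ℝ p).comp T.toLinearMap :=
    LinearMap.ext fun x => (mul_inv_cancel_left₀ hp (S x)).symm
  obtain ⟨w, hw, hTw | hTw⟩ := LinearIsometry.exists_eq_mulLR h1
  · exact ⟨p * w, w⁻¹, mul_ne_zero hp hw, inv_ne_zero hw,
      Or.inl (by rw [hST, hTw, mulLeft_comp_mulLR])⟩
  · exact ⟨p * w, w⁻¹, mul_ne_zero hp hw, inv_ne_zero hw,
      Or.inr (by rw [hST, hTw, ← LinearMap.comp_assoc, mulLeft_comp_mulLR])⟩

theorem isSimilarityQ_of_norm_map {S : ℍ →ₗ[ℝ] ℍ} {c : ℝ} (hc : 0 < c)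
    (hS : ∀ x, ‖S x‖ = c * ‖x‖) : IsSimilarityQ S :=
  ⟨c ^ 2, by positivity, inner_map_map_of_norm_map_eq_mul S hS⟩

theorem isSimilarityQ_mulLR {p q : ℍ} (hp : p ≠ 0) (hq : q ≠ 0) : IsSimilarityQ (mulLR p q) :=
  isSimilarityQ_of_norm_map (c := ‖p‖ * ‖q‖) (by positivity) fun x => by
    rw [mulLR_apply, norm_mul, norm_mul]
    ring

theorem isSimilarityQ_mulLR_comp_quatConjL {p q : ℍ} (hp : p ≠ 0) (hq : q ≠ 0) :
    IsSimilarityQ ((mulLR p q).comp quatConjL) :=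
  isSimilarityQ_of_norm_map (c := ‖p‖ * ‖q‖) (by positivity) fun x => by
    rw [LinearMap.comp_apply, quatConjL_apply, mulLR_apply, norm_mul, norm_mul, norm_star]
    ring

/-- every non-zero linear similarity of ℍ(ℝ) ≅ ℝ⁴ is of the form
x ↦ p x q (orientation preserving) or x ↦ p x̄ q (orientation reversing) with
p, q non-zero quaternions; conversely all such maps are similarities, and their
determinants are |p|⁴|q|⁴ and −|p|⁴|q|⁴ respectively. -/
theorem quaternion_similarities :
    (∀ S : ℍ →ₗ[ℝ] ℍ, IsSimilarityQ S →
      ∃ p q : ℍ, p ≠ 0 ∧ q ≠ 0 ∧ (S = mulLR p q ∨ S = (mulLR p q).comp quatConjL)) ∧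
    (∀ p q : ℍ, p ≠ 0 → q ≠ 0 →
      IsSimilarityQ (mulLR p q) ∧ IsSimilarityQ ((mulLR p q).comp quatConjL) ∧
      LinearMap.det (mulLR p q) = ‖p‖ ^ 4 * ‖q‖ ^ 4 ∧
      LinearMap.det ((mulLR p q).comp quatConjL) = -(‖p‖ ^ 4 * ‖q‖ ^ 4)) :=
  ⟨fun _ hS => hS.exists_eq_mulLR, fun p q hp hq =>
    ⟨isSimilarityQ_mulLR hp hq, isSimilarityQ_mulLR_comp_quatConjL hp hq, det_mulLR p q,
      det_mulLR_comp_quatConjL p q⟩⟩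
end
end
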